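/- arXiv:2211.09377 — 3 statements merged into one kernel-verified Lean document; each statement's English description precedes it below -/
import Mathlib

section
/- The relation ⊴' is a partial order on P_n: it is reflexive, antisymmetric, and transitive. -/
/-- The total order on boxes `(i,l)`: `(i,l) ≤ (i',l')` iff `l < l'`, or `l = l'`
and `i ≤ i'`. -/
def bLE {p d : ℕ} (b b' : Fin p × Fin d) : Prop :=
  b.2 < b'.2 ∨ (b.2 = b'.2 ∧ b.1 ≤ b'.1)

/-- The strict version of the total order on boxes. -/
def bLT {p d : ℕ} (b b' : Fin p × Fin d) : Prop :=
  b.2 < b'.2 ∨ (b.2 = b'.2 ∧ b.1 < b'.1)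

/-- The partial order `≤'` on boxes: `(i,l) ≤' (i',l')` iff `l < l'` or
`(i,l) = (i',l')`. -/
def bLE' {p d : ℕ} (b b' : Fin p × Fin d) : Prop :=
  b.2 < b'.2 ∨ b = b'

/-- A 3D multipartition of `n` with at most two nonempty components: either a
single column of `n` nodes on a box, or two columns of sizes `c₁ ≥ 1` and
`n - c₁ ≥ 1` on boxes `b₁ < b₂` (in the total order). -/
inductive MP (p d n : ℕ) : Type where
  | single (b : Fin p × Fin d) : MP p d n
  | double (b₁ b₂ : Fin p × Fin d) (c₁ : ℕ)
      (hlt : bLT b₁ b₂) (hc1 : 1 ≤ c₁) (hc2 : c₁ < n) : MP p d n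

/-- The dominance-type relation on multipartitions associated to a relation `rB`
on boxes; with `rB = bLE` this is `⊴` and with `rB = bLE'` this is `⊴'`.
For doubles, `a = c₁ - c₂ = 2c₁ - n`. -/
def dom {p d n : ℕ} (rB : (Fin p × Fin d) → (Fin p × Fin d) → Prop) :
    MP p d n → MP p d n → Prop
  | .single b₁, .single b₂ => rB b₁ b₂
  | .single _, .double _ _ _ _ _ _ => False
  | .double b₁ _ _ _ _ _, .single b₃ => rB b₁ b₃
  | .double b₁ b₂ c _ _ _, .double b₃ b₄ c' _ _ _ =>
      rB b₁ b₃ ∧ rB b₂ b₄ ∧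
      (|2 * (c : ℤ) - n| < |2 * (c' : ℤ) - n| ∨
       (|2 * (c : ℤ) - n| = |2 * (c' : ℤ) - n| ∧ 2 * (c : ℤ) - n ≥ 2 * (c' : ℤ) - n) ∨
       (|2 * (c : ℤ) - n| = |2 * (c' : ℤ) - n| ∧ 2 * (c : ℤ) - n < 2 * (c' : ℤ) - n ∧
        rB b₂ b₃))

/-!
`≤'` is a partial order on boxes that never goes against the strict total
order, i.e. `b₁ < b₂` excludes `b₂ ≤' b₁`. The comparison of two doubles is the product
of `≤'` on both boxes with an order on the imbalances `a` (first `|a|`, then `a`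
decreasing) that may be crossed upwards, from `-|a|` to `|a|`, only when the second box
of the smaller shape lies `≤'` below the first box of the larger. Transitivity holds since
`a < b < c` with `|a| = |b| = |c|` is impossible, so at most one crossing occurs, and its
box condition propagates along `≤'`. Antisymmetry holds since a crossing between two
shapes on the same boxes `b₁ < b₂` would need `b₂ ≤' b₁`.
-/

def ImbalanceLE (a b : ℤ) (P : Prop) : Prop :=
  |a| < |b| ∨ (|a| = |b| ∧ a ≥ b) ∨ (|a| = |b| ∧ a < b ∧ P)

namespace ImbalanceLE

variable {a b c : ℤ} {P Q R : Prop}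

theorem refl (a : ℤ) (P : Prop) : ImbalanceLE a a P :=
  Or.inr (Or.inl ⟨rfl, le_rfl⟩)

theorem antisymm (h : ImbalanceLE a b P) (h' : ImbalanceLE b a Q) (hP : ¬P) (hQ : ¬Q) :
    a = b := by
  rcases h with h | ⟨h, hab⟩ | ⟨-, -, hp⟩
  · rcases h' with h' | ⟨h', -⟩ | ⟨h', -⟩ <;> omega
  · rcases h' with h' | ⟨-, hba⟩ | ⟨-, -, hq⟩
    · omega
    · exact le_antisymm hba hab
    · exact absurd hq hQ
  · exact absurd hp hP

theorem of_abs_eq (h : |a| = |b|) (hP : P) : ImbalanceLE a b P :=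
  (le_or_gt b a).elim (fun hba => Or.inr (Or.inl ⟨h, hba⟩))
    fun hab => Or.inr (Or.inr ⟨h, hab, hP⟩)

theorem trans (h : ImbalanceLE a b P) (h' : ImbalanceLE b c Q) (hP : P → R) (hQ : Q → R) :
    ImbalanceLE a c R := by
  have := abs_choice a
  have := abs_choice b
  have := abs_choice c
  rcases h with h | ⟨h, hab⟩ | ⟨h, hab, hp⟩
  · left
    rcases h' with h' | ⟨h', -⟩ | ⟨h', -⟩ <;> omega
  · rcases h' with h' | ⟨h', hbc⟩ | ⟨h', -, hq⟩
    · left; omega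
    · exact Or.inr (Or.inl ⟨h.trans h', hbc.trans hab⟩)
    · exact of_abs_eq (h.trans h') (hQ hq)
  · rcases h' with h' | ⟨h', -⟩ | ⟨h', hbc, -⟩
    · left; omega
    · exact of_abs_eq (h.trans h') (hP hp)
    · omega

end ImbalanceLE

section Boxes

variable {p d : ℕ}

instance : IsPartialOrder (Fin p × Fin d) bLE' where
  refl _ := Or.inr rfl
  trans _ _ _ := by
    rintro (hab | rfl) (hbc | rfl)
    exacts [Or.inl (hab.trans hbc), Or.inl hab, Or.inl hbc, Or.inr rfl]
  antisymm _ _ := by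
    rintro (hab | rfl) (hba | hba)
    exacts [absurd (hab.trans hba) (lt_irrefl _), hba.symm, rfl, rfl]

theorem not_bLE'_of_bLT {b b' : Fin p × Fin d} (h : bLT b b') : ¬bLE' b' b := by
  rintro (h' | rfl)
  · rcases h with h | ⟨h, -⟩ <;> omega
  · rcases h with h | ⟨-, h⟩ <;> exact lt_irrefl _ h

end Boxes

section Dominance

variable {p d n : ℕ} {rB : Fin p × Fin d → Fin p × Fin d → Prop}

theorem dom_double_double_iff {b₁ b₂ b₃ b₄ : Fin p × Fin d} {c c' : ℕ}
    {hlt : bLT b₁ b₂} {hc1 : 1 ≤ c} {hc2 : c < n}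
    {hlt' : bLT b₃ b₄} {hc1' : 1 ≤ c'} {hc2' : c' < n} :
    dom rB (.double b₁ b₂ c hlt hc1 hc2) (.double b₃ b₄ c' hlt' hc1' hc2') ↔
      rB b₁ b₃ ∧ rB b₂ b₄ ∧ ImbalanceLE (2 * c - n) (2 * c' - n) (rB b₂ b₃) :=
  Iff.rfl

theorem dom_refl [Std.Refl rB] (l : MP p d n) : dom rB l l := by
  cases l with
  | single b => exact refl_of rB b
  | double b₁ b₂ c =>
    exact dom_double_double_iff.2 ⟨refl_of rB b₁, refl_of rB b₂, .refl _ _⟩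

theorem dom_antisymm [Std.Antisymm rB] (hrB : ∀ {b b'}, bLT b b' → ¬rB b' b)
    {l m : MP p d n} (h : dom rB l m) (h' : dom rB m l) : l = m := by
  cases l with
  | single b => cases m with
    | single b' => exact congrArg _ (antisymm_of rB h h')
    | double => exact h.elim
  | double b₁ b₂ c hlt => cases m with
    | single => exact h'.elim
    | double b₃ b₄ c' =>
      obtain ⟨h₁₃, h₂₄, hc⟩ := dom_double_double_iff.1 h
      obtain ⟨h₃₁, h₄₂, hc'⟩ := dom_double_double_iff.1 h'
      obtain rfl := antisymm_of rB h₁₃ h₃₁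
      obtain rfl := antisymm_of rB h₂₄ h₄₂
      obtain rfl : c = c' := by have := hc.antisymm hc' (hrB hlt) (hrB hlt); omega
      rfl

theorem dom_trans [IsTrans _ rB] {l m k : MP p d n} (h : dom rB l m) (h' : dom rB m k) :
    dom rB l k := by
  cases l with
  | single => cases m with
    | single => cases k with
      | single => exact trans_of rB h h'
      | double => exact h'.elim
    | double => exact h.elim
  | double b₁ b₂ => cases m with
    | single => cases k with
      | single => exact trans_of rB h h'
      | double => exact h'.elim
    | double b₃ b₄ => cases k with
      | single => exact trans_of rB h.1 h'
      | double b₅ b₆ =>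
        obtain ⟨h₁₃, h₂₄, hc⟩ := dom_double_double_iff.1 h
        obtain ⟨h₃₅, h₄₆, hc'⟩ := dom_double_double_iff.1 h'
        exact dom_double_double_iff.2 ⟨trans_of rB h₁₃ h₃₅, trans_of rB h₂₄ h₄₆,
          hc.trans hc' (fun h₂₃ => trans_of rB h₂₃ h₃₅) (trans_of rB h₂₄)⟩

end Dominance

theorem dom_bLE'_isPartialOrder_general (p d n : ℕ) :
    (∀ l : MP p d n, dom bLE' l l) ∧
    (∀ l m : MP p d n, dom bLE' l m → dom bLE' m l → l = m) ∧
    (∀ l m k : MP p d n, dom bLE' l m → dom bLE' m k → dom bLE' l k) :=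
  ⟨dom_refl, fun _ _ => dom_antisymm not_bLE'_of_bLT, fun _ _ _ => dom_trans⟩

/-- the relation `⊴'` is a partial order on `P_n`. -/
theorem dom_bLE'_isPartialOrder (p d n : ℕ) (hp : 1 ≤ p) (hd : 1 ≤ d) (hn : 1 ≤ n) :
    (∀ l : MP p d n, dom bLE' l l) ∧
    (∀ l m : MP p d n, dom bLE' l m → dom bLE' m l → l = m) ∧
    (∀ l m k : MP p d n, dom bLE' l m → dom bLE' m k → dom bLE' l k) :=
  dom_bLE'_isPartialOrder_general p d n
end

section
/- Assume the separation hypothesis. Let λ = λ^{[a]}_{(i₁,l₁),(i₂,l₂)} ∈ P_n be an irreducible multipartition (i.e., i₁ ≠ i₂). If μ ∈ P_n, u is a standard tableau of shape λ, t is a standard tableau of shape μ, and res(t) = res(u), then μ = λ. -/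
/-- A node: a (1-based) row index together with a box. -/
abbrev Nd (p d : ℕ) : Type := ℕ × (Fin p × Fin d)

/-- The set of nodes of a multipartition. -/
def nodes {p d n : ℕ} : MP p d n → Set (Nd p d)
  | .single b => {x | x.2 = b ∧ 1 ≤ x.1 ∧ x.1 ≤ n}
  | .double b₁ b₂ c₁ _ _ _ =>
      {x | (x.2 = b₁ ∧ 1 ≤ x.1 ∧ x.1 ≤ c₁) ∨ (x.2 = b₂ ∧ 1 ≤ x.1 ∧ x.1 ≤ n - c₁)}

/-- A tableau of shape `l`: a bijection from `{1, …, n}` (modelled as `Fin n`,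
with `m : Fin n` representing the entry `m + 1`) onto the nodes of `l`. -/
def IsTab {p d n : ℕ} (l : MP p d n) (t : Fin n → Nd p d) : Prop :=
  Function.Injective t ∧ Set.range t = nodes l

/-- A standard tableau: a tableau in which, within each column, the entries
increase with the row index. -/
def IsStd {p d n : ℕ} (l : MP p d n) (t : Fin n → Nd p d) : Prop :=
  IsTab l t ∧
  ∀ m m' : Fin n, (t m).2 = (t m').2 → (t m).1 < (t m').1 → m < m'

/-- The residue of a node: the node in row `a` on box `(i,l)` has residue
`(i, j_l + 1 − a) ∈ ℤ/pℤ × ℤ/eℤ`. -/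
def resNd {p d : ℕ} (e : ℕ) (j : Fin d → ZMod e) (x : Nd p d) : ZMod p × ZMod e :=
  ((x.2.1 : ZMod p), j x.2.2 + 1 - (x.1 : ZMod e))

/-- The separation hypothesis: the `2r` elements `(i, j_l)` and `(i, j_l − 1)`,
for `(i,l) ∈ 𝒦`, are pairwise distinct. -/
def SepHyp (p d e : ℕ) (j : Fin d → ZMod e) : Prop :=
  Function.Injective (fun x : (Fin p × Fin d) × Bool =>
    (((x.1.1 : ZMod p), j x.1.2 - (if x.2 then 1 else 0)) : ZMod p × ZMod e))

/-- The total order on nodes: `(a,(i,l)) < (a',(i',l'))` iff `a < a'`, or `a = a'`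
and `l < l'`, or `a = a'`, `l = l'` and `i < i'`. -/
def ndLT {p d : ℕ} (x y : Nd p d) : Prop :=
  x.1 < y.1 ∨ (x.1 = y.1 ∧ (x.2.2 < y.2.2 ∨ (x.2.2 = y.2.2 ∧ x.2.1 < y.2.1)))

/-!
Residues determine the `i`-coordinate of the box of every entry. As the two columns of `λ` lie
over different `i`, the columns of `t` and of `u` then consist of the same entries, and since in a
standard tableau the row of an entry is its rank within its column, `t` and `u` put every entry in
the same row. Equal rows and equal residues give equal boxes by the separation hypothesis, so
`t = u`, and a shape is determined by its set of nodes.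
-/

section Shapes

variable {p d n : ℕ}

lemma one_le_of_mem_nodes {l : MP p d n} {x : Nd p d} (hx : x ∈ nodes l) : 1 ≤ x.1 := by
  cases l <;> simp only [nodes, Set.mem_ofPred_eq] at hx <;> omega

lemma mem_nodes_of_le {l : MP p d n} {x : Nd p d} (hx : x ∈ nodes l) {k : ℕ} (hk : 1 ≤ k)
    (hkx : k ≤ x.1) : (k, x.2) ∈ nodes l := by
  cases l <;> simp only [nodes, Set.mem_ofPred_eq] at hx ⊢ <;> grind

lemma exists_boxes_cover (l : MP p d n) :
    ∃ β γ : Fin p × Fin d, ∀ x ∈ nodes l, x.2 = β ∨ x.2 = γ := by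
  cases l with
  | single b => exact ⟨b, b, fun x hx => Or.inl hx.1⟩
  | double b₁ b₂ _ _ _ _ => exact ⟨b₁, b₂, fun x hx => hx.imp (·.1) (·.1)⟩

lemma nodes_injective (hn : 0 < n) : Function.Injective (nodes : MP p d n → Set (Nd p d)) := by
  intro l l' h
  have key : ∀ x, x ∈ nodes l ↔ x ∈ nodes l' := fun x => by rw [h]
  cases l with
  | single b =>
    cases l' with
    | single b' =>
      exact congrArg MP.single ((key (1, b)).mp ⟨rfl, le_rfl, hn⟩).1
    | double b₃ b₄ c' h' _ _ =>
      have h3 := key (1, b₃)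
      have h4 := key (1, b₄)
      simp only [nodes, Set.mem_ofPred_eq, le_refl, true_and, bLT] at h3 h4 h'
      grind
  | double b₁ b₂ c hlt _ _ =>
    cases l' with
    | single b' =>
      have h1 := key (1, b₁)
      have h2 := key (1, b₂)
      simp only [nodes, Set.mem_ofPred_eq, le_refl, true_and, bLT] at h1 h2 hlt
      grind
    | double b₃ b₄ c' h' _ _ =>
      -- the tops of the columns match the boxes, the nodes `(c, b₁)`, `(c', b₃)` the heights
      have h1 := key (1, b₁)
      have h2 := key (1, b₂)
      have h3 := key (1, b₃)
      have h4 := key (1, b₄)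
      have hc := key (c, b₁)
      have hc' := key (c', b₃)
      simp only [nodes, Set.mem_ofPred_eq, le_refl, true_and, and_true, bLT]
        at h1 h2 h3 h4 hc hc' hlt h'
      grind

section Tableaux

variable {p d n : ℕ} {l l' : MP p d n} {t u : Fin n → Nd p d}

lemma IsTab.mem_nodes (ht : IsTab l t) (a : Fin n) : t a ∈ nodes l :=
  ht.2 ▸ Set.mem_range_self a

lemma IsTab.box_eq_iff_fst_eq (ht : IsTab l t) {a₁ a₂ : Fin n} (h₁₂ : (t a₁).2.1 ≠ (t a₂).2.1)
    (a a' : Fin n) : (t a').2 = (t a).2 ↔ (t a').2.1 = (t a).2.1 := by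
  refine ⟨congrArg Prod.fst, fun h => ?_⟩
  obtain ⟨β, γ, hβγ⟩ := exists_boxes_cover l
  have := hβγ _ (ht.mem_nodes a)
  have := hβγ _ (ht.mem_nodes a')
  have := hβγ _ (ht.mem_nodes a₁)
  have := hβγ _ (ht.mem_nodes a₂)
  grind

open Finset in
lemma IsStd.row_eq_card (ht : IsStd l t) (a : Fin n) :
    (t a).1 = #{a' | a' ≤ a ∧ (t a').2 = (t a).2} := by
  have hcol : ∀ k, 1 ≤ k → k ≤ (t a).1 → ∃ a', t a' = (k, (t a).2) := fun k hk hka =>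
    (ht.1.2 ▸ mem_nodes_of_le (ht.1.mem_nodes a) hk hka : (k, (t a).2) ∈ Set.range t)
  calc (t a).1 = #(Icc 1 (t a).1) := by simp
    _ = _ := by
      refine (card_nbij (fun a' => (t a').1) ?_ ?_ ?_).symm
      · intro a' ha'
        simp only [coe_filter, mem_univ, true_and, coe_Icc] at ha' ⊢
        exact ⟨one_le_of_mem_nodes (ht.1.mem_nodes a'),
          not_lt.1 fun h => (ht.2 a a' ha'.2.symm h).not_ge ha'.1⟩
      · intro a' ha' a'' ha'' h
        simp only [coe_filter, mem_univ, true_and] at ha' ha''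
        exact ht.1.1 (Prod.ext h (ha'.2.trans ha''.2.symm))
      · intro k hk
        simp only [coe_Icc, Set.mem_Icc] at hk
        obtain ⟨a', ha'⟩ := hcol k hk.1 hk.2
        refine ⟨a', ?_, by simp [ha']⟩
        simp only [coe_filter, mem_univ, true_and, ha', Set.mem_ofPred_eq, and_true]
        rcases hk.2.lt_or_eq with h | h
        · exact (ht.2 a' a (by rw [ha']) (by rw [ha']; exact h)).le
        · exact (ht.1.1 (ha'.trans (Prod.ext h rfl))).le

lemma IsStd.row_eq_of_box_eq_iff (ht : IsStd l t) (hu : IsStd l' u)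
    (hbox : ∀ a a', (t a').2 = (t a).2 ↔ (u a').2 = (u a).2) (a : Fin n) :
    (t a).1 = (u a).1 := by
  simp only [ht.row_eq_card, hu.row_eq_card, hbox]

end Tableaux

section Residues

variable {p d e : ℕ} {j : Fin d → ZMod e} {x y : Nd p d}

lemma box_fst_eq_of_resNd_eq (h : resNd e j x = resNd e j y) : x.2.1 = y.2.1 := by
  have := congrArg Prod.fst h
  rw [resNd, resNd, ZMod.natCast_eq_natCast_iff', Nat.mod_eq_of_lt x.2.1.isLt,
    Nat.mod_eq_of_lt y.2.1.isLt] at this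
  exact Fin.ext this

lemma SepHyp.eq_of_resNd_eq (hsep : SepHyp p d e j) (h : resNd e j x = resNd e j y)
    (hrow : x.1 = y.1) : x = y := by
  have hj : j x.2.2 = j y.2.2 := by
    simpa [resNd, hrow] using congrArg Prod.snd h
  have hbox := hsep (a₁ := (x.2, false)) (a₂ := (y.2, false))
    (by simp [box_fst_eq_of_resNd_eq h, hj])
  exact Prod.ext hrow (congrArg Prod.fst hbox)

end Residues

theorem shape_eq_of_res_eq_irreducible_general (p d n : ℕ)
    (e : ℕ) (j : Fin d → ZMod e) (hsep : SepHyp p d e j)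
    (b₁ b₂ : Fin p × Fin d) (c₁ : ℕ) (hlt : bLT b₁ b₂) (hc1 : 1 ≤ c₁) (hc2 : c₁ < n)
    (hirr : b₁.1 ≠ b₂.1)
    (m : MP p d n) (u t : Fin n → Nd p d)
    (hu : IsStd (MP.double b₁ b₂ c₁ hlt hc1 hc2) u) (ht : IsStd m t)
    (hres : ∀ a : Fin n, resNd e j (t a) = resNd e j (u a)) :
    m = MP.double b₁ b₂ c₁ hlt hc1 hc2 := by
  obtain ⟨a₁, ha₁⟩ : ((1 : ℕ), b₁) ∈ Set.range u := hu.1.2 ▸ Or.inl ⟨rfl, le_rfl, hc1⟩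
  obtain ⟨a₂, ha₂⟩ : ((1 : ℕ), b₂) ∈ Set.range u := hu.1.2 ▸ Or.inr ⟨rfl, le_rfl, by omega⟩
  have hfst : ∀ a, (t a).2.1 = (u a).2.1 := fun a => box_fst_eq_of_resNd_eq (hres a)
  have hu₁₂ : (u a₁).2.1 ≠ (u a₂).2.1 := by rwa [ha₁, ha₂]
  have ht₁₂ : (t a₁).2.1 ≠ (t a₂).2.1 := by rwa [hfst, hfst]
  have hbox : ∀ a a', (t a').2 = (t a).2 ↔ (u a').2 = (u a).2 := fun a a' => by
    rw [ht.1.box_eq_iff_fst_eq ht₁₂, hu.1.box_eq_iff_fst_eq hu₁₂, hfst, hfst]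
  have htu : t = u := funext fun a =>
    hsep.eq_of_resNd_eq (hres a) (ht.row_eq_of_box_eq_iff hu hbox a)
  subst htu
  exact nodes_injective (by omega) (ht.1.2.symm.trans hu.1.2)

/-- under the separation hypothesis, if `λ` is an irreducible
double shape (`i₁ ≠ i₂`), `u` is a standard tableau of shape `λ`, `t` is a
standard tableau of shape `μ`, and `res(t) = res(u)`, then `μ = λ`. -/
theorem shape_eq_of_res_eq_irreducible (p d n : ℕ) (hp : 1 ≤ p) (hd : 1 ≤ d)
    (hn : 1 ≤ n) (e : ℕ) (j : Fin d → ZMod e) (hsep : SepHyp p d e j)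
    (b₁ b₂ : Fin p × Fin d) (c₁ : ℕ) (hlt : bLT b₁ b₂) (hc1 : 1 ≤ c₁) (hc2 : c₁ < n)
    (hirr : b₁.1 ≠ b₂.1)
    (m : MP p d n) (u t : Fin n → Nd p d)
    (hu : IsStd (MP.double b₁ b₂ c₁ hlt hc1 hc2) u) (ht : IsStd m t)
    (hres : ∀ a : Fin n, resNd e j (t a) = resNd e j (u a)) :
    m = MP.double b₁ b₂ c₁ hlt hc1 hc2 :=
  shape_eq_of_res_eq_irreducible_general p d n e j hsep b₁ b₂ c₁ hlt hc1 hc2 hirr m u t hu ht hres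
end Shapes
end

section
/- The number of triples (λ, s, t), where λ ∈ P_n and s, t are standard tableaux of shape λ, equals C(r,2)·C(2n,n) − r² + 2r, where C denotes the binomial coefficient; equivalently, Σ_{λ∈P_n} |Std(λ)|² = r + C(r,2)·(C(2n,n) − 2). (This number is the dimension of TL_{r,1,n}(q,ζ), i.e. p times the dimension of TL_{r,p,n}.) -/
/-!
A standard tableau of a shape made of columns is determined by the box on which each entry sits:
entries increase down a column, so the entry `m` lies in row `1 + #{m' < m on the same box}`,
and conversely every assignment of entries to boxes that fills each column to its height gives a
standard tableau. Hence a single column has one standard tableau, and a double shape with columns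
of heights `c₁` and `n - c₁` has `C(n, c₁)` of them (choose the entries of the first column).
Summing squares over the `r` single and `C(r,2) (n - 1)` double shapes and using Vandermonde's
`∑ C(n,c)² = C(2n,n)` gives `r + C(r,2) (C(2n,n) - 2)`.
-/

open Finset

lemma bLT.ne {p d : ℕ} {b b' : Fin p × Fin d} (h : bLT b b') : b ≠ b' := by
  rintro rfl
  rcases h with h | ⟨_, h⟩ <;> exact lt_irrefl _ h

section Rank

variable {α : Type*} [LinearOrder α]

lemma strictMonoOn_card_filter_lt (A : Finset α) :
    StrictMonoOn (fun m => #{x ∈ A | x < m}) A := by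
  intro m hm m' _ hmm'
  have hsub : {x ∈ A | x < m} ⊆ {x ∈ A | x < m'} := fun x hx => by
    simp only [mem_filter] at hx ⊢
    exact ⟨hx.1, hx.2.trans hmm'⟩
  exact card_lt_card ((ssubset_iff_of_subset hsub).2 ⟨m, mem_filter.2 ⟨hm, hmm'⟩, by simp⟩)

lemma image_card_filter_lt_add_one (A : Finset α) :
    A.image (fun m => #{x ∈ A | x < m} + 1) = Icc 1 #A := by
  refine eq_of_subset_of_card_le (fun k hk => ?_) ?_
  · obtain ⟨m, hm, rfl⟩ := mem_image.1 hk
    have : #{x ∈ A | x < m} < #A := card_lt_card (filter_ssubset.2 ⟨m, hm, lt_irrefl m⟩)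
    rw [mem_Icc]
    omega
  · rw [card_image_of_injOn, Nat.card_Icc, Nat.add_sub_cancel]
    intro m hm m' hm' h
    exact (strictMonoOn_card_filter_lt A).injOn hm hm' (Nat.add_right_cancel h)

lemma eq_card_filter_lt_add_one {A : Finset α} {f : α → ℕ} {c : ℕ}
    (hf : StrictMonoOn f A) (hfA : A.image f = Icc 1 c) {m : α} (hm : m ∈ A) :
    f m = #{x ∈ A | x < m} + 1 := by
  have hf_mem : ∀ x ∈ A, f x ∈ Icc 1 c := fun x hx => hfA ▸ mem_image_of_mem f hx
  have himage : {x ∈ A | x < m}.image f = Ico 1 (f m) := by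
    ext k
    simp only [mem_image, mem_filter, mem_Ico]
    constructor
    · rintro ⟨x, ⟨hx, hxm⟩, rfl⟩
      exact ⟨(mem_Icc.1 (hf_mem x hx)).1, hf hx hm hxm⟩
    · rintro ⟨hk1, hkm⟩
      have hk : k ∈ A.image f := hfA ▸ mem_Icc.2 ⟨hk1, hkm.le.trans (mem_Icc.1 (hf_mem m hm)).2⟩
      obtain ⟨x, hx, rfl⟩ := mem_image.1 hk
      exact ⟨x, ⟨hx, (hf.lt_iff_lt hx hm).1 hkm⟩, rfl⟩
  rw [← card_image_of_injOn (hf.injOn.mono (filter_subset _ _)), himage, Nat.card_Ico]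
  have := (mem_Icc.1 (hf_mem m hm)).1
  omega

end Rank

namespace MP

variable {p d n : ℕ}

def height : MP p d n → Fin p × Fin d → ℕ
  | single b₀, b => if b = b₀ then n else 0
  | double b₁ b₂ c₁ _ _ _, b => if b = b₁ then c₁ else if b = b₂ then n - c₁ else 0

lemma mem_nodes_iff {l : MP p d n} {x : Nd p d} :
    x ∈ nodes l ↔ 1 ≤ x.1 ∧ x.1 ≤ l.height x.2 := by
  cases l with
  | single b₀ =>
    by_cases h : x.2 = b₀
    · simp [nodes, height, h]
    · simp [nodes, height, h]
      omega
  | double b₁ b₂ c₁ hlt _ _ =>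
    by_cases h₁ : x.2 = b₁
    · simp [nodes, height, h₁, hlt.ne]
    · by_cases h₂ : x.2 = b₂
      · simp [nodes, height, h₂, hlt.ne.symm]
      · simp [nodes, height, h₁, h₂]
        omega

end MP

section Tableau

variable {p d n : ℕ} {l : MP p d n}

/-- Writes the entries `m` with `β m = b` down column `b` in increasing order. -/
def ofBoxes (β : Fin n → Fin p × Fin d) : Fin n → Nd p d :=
  fun m => (#{x ∈ {y | β y = β m} | x < m} + 1, β m)

namespace IsStd

variable {t : Fin n → Nd p d}

lemma strictMonoOn_row (ht : IsStd l t) (b : Fin p × Fin d) :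
    StrictMonoOn (fun m => (t m).1) ({m | (t m).2 = b} : Finset (Fin n)) := by
  intro m hm m' hm' hmm'
  simp only [coe_filter, mem_univ, true_and, Set.mem_ofPred_eq] at hm hm'
  rcases lt_trichotomy (t m).1 (t m').1 with h | h | h
  · exact h
  · exact absurd (ht.1.1 (Prod.ext h (hm.trans hm'.symm))) hmm'.ne
  · exact absurd (ht.2 m' m (hm'.trans hm.symm) h) hmm'.asymm

lemma image_row (ht : IsStd l t) (b : Fin p × Fin d) :
    ({m | (t m).2 = b} : Finset (Fin n)).image (fun m => (t m).1) = Icc 1 (l.height b) := by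
  ext a
  rw [mem_Icc, ← MP.mem_nodes_iff (x := (a, b)), ← ht.1.2]
  simp only [mem_image, mem_filter, mem_univ, true_and, Set.mem_range]
  constructor
  · rintro ⟨m, hb, rfl⟩
    exact ⟨m, Prod.ext rfl hb⟩
  · rintro ⟨m, hm⟩
    exact ⟨m, congrArg Prod.snd hm, congrArg Prod.fst hm⟩

lemma card_column (ht : IsStd l t) (b : Fin p × Fin d) :
    #{m | (t m).2 = b} = l.height b := by
  rw [← card_image_of_injOn (ht.strictMonoOn_row b).injOn, ht.image_row b, Nat.card_Icc,
    Nat.add_sub_cancel]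

lemma eq_ofBoxes (ht : IsStd l t) : t = ofBoxes (fun m => (t m).2) :=
  funext fun m => Prod.ext
    (eq_card_filter_lt_add_one (ht.strictMonoOn_row _) (ht.image_row _) (by simp)) rfl

end IsStd

lemma isStd_ofBoxes {β : Fin n → Fin p × Fin d} (hβ : ∀ b, #{m | β m = b} = l.height b) :
    IsStd l (ofBoxes β) := by
  have hrank (b : Fin p × Fin d) := strictMonoOn_card_filter_lt ({m | β m = b} : Finset (Fin n))
  refine ⟨⟨fun m m' h => ?_, ?_⟩, fun m m' hb hrow => ?_⟩
  · simp only [ofBoxes, Prod.mk.injEq] at h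
    obtain ⟨hrow, hb⟩ := h
    rw [hb] at hrow
    exact (hrank (β m')).injOn (by simp [hb]) (by simp) (Nat.add_right_cancel hrow)
  · ext x
    rw [MP.mem_nodes_iff, ← hβ x.2, ← mem_Icc, ← image_card_filter_lt_add_one, Set.mem_range,
      mem_image]
    constructor
    · rintro ⟨m, rfl⟩
      exact ⟨m, mem_filter.2 ⟨mem_univ m, rfl⟩, rfl⟩
    · rintro ⟨m, hm, hrow⟩
      simp only [mem_filter, mem_univ, true_and] at hm
      exact ⟨m, Prod.ext (by simp [ofBoxes, hm, hrow]) hm⟩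
  · simp only [ofBoxes] at hb hrow
    rw [hb] at hrow
    exact ((hrank (β m')).lt_iff_lt (by simp [hb]) (by simp)).1 (by omega)

def stdEquivBoxes (l : MP p d n) :
    {t // IsStd l t} ≃ {β : Fin n → Fin p × Fin d // ∀ b, #{m | β m = b} = l.height b} where
  toFun t := ⟨fun m => (t.1 m).2, t.2.card_column⟩
  invFun β := ⟨ofBoxes β.1, isStd_ofBoxes β.2⟩
  left_inv t := Subtype.ext t.2.eq_ofBoxes.symm
  right_inv _ := rfl

instance (l : MP p d n) : Finite {t // IsStd l t} :=
  Finite.of_equiv _ (stdEquivBoxes l).symm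

lemma eq_const_of_card_filter_eq {β : Fin n → Fin p × Fin d} {b₀ : Fin p × Fin d}
    (hβ : #{m | β m = b₀} = n) : β = fun _ => b₀ :=
  funext fun m => card_filter_eq_iff.1 (by simpa using hβ) m (mem_univ m)

lemma card_std_single (b₀ : Fin p × Fin d) :
    Nat.card {t // IsStd (MP.single (n := n) b₀) t} = 1 := by
  rw [Nat.card_congr (stdEquivBoxes _), Nat.card_eq_one_iff_unique]
  have hconst (β : Fin n → Fin p × Fin d)
      (hβ : ∀ b, #{m | β m = b} = (MP.single (n := n) b₀).height b) : β = fun _ => b₀ :=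
    eq_const_of_card_filter_eq (by simpa [MP.height] using hβ b₀)
  refine ⟨⟨fun β β' => Subtype.ext ((hconst _ β.2).trans (hconst _ β'.2).symm)⟩,
    ⟨⟨fun _ => b₀, fun b => ?_⟩⟩⟩
  by_cases h : b = b₀
  · simp [MP.height, h]
  · simp [MP.height, h, Ne.symm h]

section Double

variable {b₁ b₂ : Fin p × Fin d} {c₁ : ℕ} (hlt : bLT b₁ b₂) (hc1 : 1 ≤ c₁) (hc2 : c₁ < n)

lemma card_filter_ite_eq_height {S : Finset (Fin n)} (hS : #S = c₁) (b : Fin p × Fin d) :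
    #{m | (if m ∈ S then b₁ else b₂) = b} = (MP.double b₁ b₂ c₁ hlt hc1 hc2).height b := by
  have hne : b₂ ≠ b₁ := hlt.ne.symm
  by_cases h₁ : b = b₁
  · subst h₁
    simp [MP.height, hne, hS]
  · by_cases h₂ : b = b₂
    · subst h₂
      simp [MP.height, h₁, hne.symm, filter_not, card_univ_sdiff, ← hS]
    · simp [MP.height, h₁, h₂, Ne.symm h₁, Ne.symm h₂, ite_eq_iff]

def boxesEquivFinsetOfDouble :
    {β : Fin n → Fin p × Fin d // ∀ b, #{m | β m = b} = (MP.double b₁ b₂ c₁ hlt hc1 hc2).height b}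
      ≃ {S : Finset (Fin n) // #S = c₁} where
  toFun β := ⟨({m | β.1 m = b₁} : Finset (Fin n)), by simpa [MP.height] using β.2 b₁⟩
  invFun S := ⟨fun m => if m ∈ S.1 then b₁ else b₂, card_filter_ite_eq_height hlt hc1 hc2 S.2⟩
  left_inv β := by
    refine Subtype.ext (funext fun m => ?_)
    by_cases hm : β.1 m = b₁
    · simp [hm]
    · have hb₂ : β.1 m = b₂ := by
        by_contra h
        have hempty := β.2 (β.1 m)
        simp only [MP.height, hm, h, if_false, card_eq_zero] at hempty
        exact (eq_empty_iff_forall_notMem.1 hempty m) (by simp)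
      simp [hb₂, hlt.ne.symm]
  right_inv S := Subtype.ext (by ext m; by_cases hm : m ∈ S.1 <;> simp [hm, hlt.ne.symm])

lemma card_std_double :
    Nat.card {t // IsStd (MP.double b₁ b₂ c₁ hlt hc1 hc2) t} = n.choose c₁ := by
  rw [Nat.card_congr ((stdEquivBoxes _).trans (boxesEquivFinsetOfDouble hlt hc1 hc2)),
    Nat.card_eq_fintype_card, Fintype.card_finset_len, Fintype.card_fin]

end Double

end Tableau

section Counting

def boxLex (p d : ℕ) : (Fin p × Fin d) ≃ Lex (Fin d × Fin p) :=
  (Equiv.prodComm _ _).trans toLex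

lemma bLT_iff_boxLex_lt {p d : ℕ} {b b' : Fin p × Fin d} :
    bLT b b' ↔ boxLex p d b < boxLex p d b' := by
  simp [boxLex, bLT, Prod.Lex.toLex_lt_toLex]

lemma card_bLT_pairs (p d : ℕ) :
    Nat.card {bb : (Fin p × Fin d) × (Fin p × Fin d) // bLT bb.1 bb.2} = (p * d).choose 2 := by
  classical
  rw [Nat.card_congr (((boxLex p d).prodCongr (boxLex p d)).subtypeEquiv
      (q := fun x => x.1 < x.2) fun _ => bLT_iff_boxLex_lt),
    Nat.card_eq_fintype_card, Fintype.card_subtype, Fintype.card_product_filter_lt,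
    Fintype.card_lex, Fintype.card_prod, Fintype.card_fin, Fintype.card_fin, mul_comm]

/-- A double shape is recorded by its boxes and by `c₁ - 1`. -/
def MP.equivSum (p d n : ℕ) :
    MP p d n ≃ (Fin p × Fin d) ⊕
      ({bb : (Fin p × Fin d) × (Fin p × Fin d) // bLT bb.1 bb.2} × Fin (n - 1)) where
  toFun
    | .single b => .inl b
    | .double b₁ b₂ c₁ hlt _ _ => .inr (⟨(b₁, b₂), hlt⟩, ⟨c₁ - 1, by omega⟩)
  invFun
    | .inl b => .single b
    | .inr (bb, i) => .double bb.1.1 bb.1.2 (i + 1) bb.2 (Nat.le_add_left 1 _) (by omega)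
  left_inv l := by
    cases l with
    | single b => rfl
    | double b₁ b₂ c₁ hlt hc1 hc2 =>
      obtain ⟨c, rfl⟩ := Nat.exists_eq_add_one_of_ne_zero (by omega : c₁ ≠ 0)
      rfl
  right_inv y := by
    rcases y with b | ⟨bb, i⟩ <;> rfl

lemma sum_choose_succ_sq {n : ℕ} (hn : 1 ≤ n) :
    ∑ i : Fin (n - 1), n.choose (i + 1) ^ 2 = (2 * n).choose n - 2 := by
  obtain ⟨m, rfl⟩ := Nat.exists_eq_add_one_of_ne_zero (by omega : n ≠ 0)
  have h := Nat.sum_range_choose_sq (m + 1)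
  rw [Finset.sum_range_succ', Finset.sum_range_succ] at h
  rw [Fin.sum_univ_eq_sum_range (fun i => (m + 1).choose (i + 1) ^ 2), Nat.add_sub_cancel]
  simp only [Nat.choose_zero_right, Nat.choose_self, one_pow] at h
  omega

theorem card_std_pairs (p d : ℕ) {n : ℕ} (hn : 1 ≤ n) :
    Nat.card {x : MP p d n × (Fin n → Nd p d) × (Fin n → Nd p d) //
        IsStd x.1 x.2.1 ∧ IsStd x.1 x.2.2}
      = p * d + (p * d).choose 2 * ((2 * n).choose n - 2) := by
  classical
  let Std (l : MP p d n) := {t // IsStd l t}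
  calc _ = Nat.card (Σ l : MP p d n, Std l × Std l) :=
        Nat.card_congr ((Equiv.subtypeProdEquivSigmaSubtype _).trans
          (Equiv.sigmaCongrRight fun _ => Equiv.subtypeProdEquivProd))
    _ = ∑ y, Nat.card (Std ((MP.equivSum p d n).symm y)) ^ 2 := by
        rw [Nat.card_congr (Equiv.sigmaCongrLeft' (MP.equivSum p d n)), Nat.card_sigma]
        simp only [Nat.card_prod, sq]
    _ = p * d + (p * d).choose 2 * ((2 * n).choose n - 2) := by
        simp only [Fintype.sum_sum_type, MP.equivSum, Equiv.coe_fn_symm_mk, Std,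
          card_std_single, card_std_double, one_pow, sum_const, card_univ, Fintype.card_prod,
          Fintype.card_fin, smul_eq_mul, mul_one]
        rw [Fintype.sum_prod_type]
        simp only [sum_choose_succ_sq hn, sum_const, card_univ, ← Nat.card_eq_fintype_card,
          card_bLT_pairs, smul_eq_mul]

end Counting

theorem card_cellular_basis_general (p d n r : ℕ) (hn : 1 ≤ n)
    (hr : r = p * d) :
    ((Nat.card {x : MP p d n × (Fin n → Nd p d) × (Fin n → Nd p d) //
        IsStd x.1 x.2.1 ∧ IsStd x.1 x.2.2} : ℤ)
      = (r.choose 2 : ℤ) * ((2 * n).choose n : ℤ) - (r : ℤ) ^ 2 + 2 * r) ∧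
    (Nat.card {x : MP p d n × (Fin n → Nd p d) × (Fin n → Nd p d) //
        IsStd x.1 x.2.1 ∧ IsStd x.1 x.2.2}
      = r + r.choose 2 * ((2 * n).choose n - 2)) := by
  have hcard := card_std_pairs p d hn
  rw [← hr] at hcard
  refine ⟨?_, hcard⟩
  have hcentral : 2 ≤ (2 * n).choose n :=
    Nat.centralBinom_eq_two_mul_choose n ▸ Nat.two_le_centralBinom n hn
  rw [hcard]
  qify [hcentral]
  rw [Nat.cast_choose_two]
  ring

/-- the number of triples `(λ, s, t)` with `λ ∈ P_n` and
`s, t ∈ Std(λ)` equals `C(r,2)·C(2n,n) − r² + 2r = r + C(r,2)·(C(2n,n) − 2)`,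
where `r = pd`. -/
theorem card_cellular_basis (p d n r : ℕ) (hp : 1 ≤ p) (hd : 1 ≤ d) (hn : 1 ≤ n)
    (hr : r = p * d) :
    ((Nat.card {x : MP p d n × (Fin n → Nd p d) × (Fin n → Nd p d) //
        IsStd x.1 x.2.1 ∧ IsStd x.1 x.2.2} : ℤ)
      = (r.choose 2 : ℤ) * ((2 * n).choose n : ℤ) - (r : ℤ) ^ 2 + 2 * r) ∧
    (Nat.card {x : MP p d n × (Fin n → Nd p d) × (Fin n → Nd p d) //
        IsStd x.1 x.2.1 ∧ IsStd x.1 x.2.2}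
      = r + r.choose 2 * ((2 * n).choose n - 2)) :=
  card_cellular_basis_general p d n r hn hr
end
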